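/- For every positive integer d and every term order ≺ on the terms of S = K[x_0,…,x_n] (n ≥ 1), there exists exactly one saturated segment ideal I ⊆ S with respect to ≺ whose Hilbert polynomial is the constant polynomial p(z) = d. -/

import Mathlib

open Polynomial

/-- Exponent vectors of monomials (terms) of `S = K[x_0, …, x_n]`. -/
abbrev Expo (n : ℕ) := Fin (n + 1) → ℕ

/-- The degree of a term. -/
def deg {n : ℕ} (α : Expo n) : ℕ := ∑ i, α i

/-- The exponent vector of the variable `x_i`. -/
def sing {n : ℕ} (i : Fin (n + 1)) : Expo n := Pi.single i 1

/-- `MoveDown α β` : the term `α` is obtained from `β` by an elementary move `e_j^-`,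
i.e. `α = x_{j-1}·β/x_j` for some `j ≥ 1` with `β_j > 0`. -/
def MoveDown {n : ℕ} (α β : Expo n) : Prop :=
  ∃ j k : Fin (n + 1), (k : ℕ) + 1 = (j : ℕ) ∧ α + sing j = β + sing k

/-- The Borel (partial) order `α <_B β` : transitive closure of elementary moves `e_j^-`. -/
def BorelLt {n : ℕ} (α β : Expo n) : Prop := Relation.TransGen MoveDown α β

/-- A Borel set: a set of terms closed upwards under the Borel order. -/
def IsBorelSet {n : ℕ} (B : Set (Expo n)) : Prop :=
  ∀ α β : Expo n, α ∈ B → MoveDown α β → β ∈ B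

/-- A monomial ideal, identified with its set of terms: closed under multiplication
by arbitrary terms. -/
def IsMonIdeal {n : ℕ} (M : Set (Expo n)) : Prop :=
  ∀ α ∈ M, ∀ γ : Expo n, α + γ ∈ M

/-- A Borel ideal: a monomial ideal which is a Borel set in every degree. -/
def IsBorelIdeal {n : ℕ} (M : Set (Expo n)) : Prop :=
  IsMonIdeal M ∧ IsBorelSet M

/-- `𝒩(M)_t` : the set of degree-`t` terms not lying in `M`. -/
def coIdeal {n : ℕ} (M : Set (Expo n)) (t : ℕ) : Set (Expo n) :=
  {α | deg α = t ∧ α ∉ M}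

/-- `p` is the Hilbert polynomial of `S/M` : `|𝒩(M)_t| = p(t)` for all `t` large. -/
def HasHilbPoly {n : ℕ} (M : Set (Expo n)) (p : Polynomial ℚ) : Prop :=
  ∃ N : ℕ, ∀ t : ℕ, N ≤ t → ((coIdeal M t).ncard : ℚ) = p.eval (t : ℚ)

/-- Saturation for monomial ideals: a term `α` with `x_i^{k_i}·α ∈ M` for suitable
powers of every variable already lies in `M`. -/
def IsSaturatedIdeal {n : ℕ} (M : Set (Expo n)) : Prop :=
  ∀ α : Expo n, (∀ i : Fin (n + 1), ∃ k : ℕ, α + k • sing i ∈ M) → α ∈ M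

/-- A term order on the terms of `S`: a multiplicative (strict) total order with `1`
as least element and `x_0 ≺ x_1 ≺ … ≺ x_n`. -/
structure TermOrder (n : ℕ) where
  lt : Expo n → Expo n → Prop
  irrefl : ∀ a : Expo n, ¬ lt a a
  trans : ∀ a b c : Expo n, lt a b → lt b c → lt a c
  total : ∀ a b : Expo n, a ≠ b → lt a b ∨ lt b a
  add_right : ∀ a b c : Expo n, lt a b → lt (a + c) (b + c)
  zero_lt : ∀ a : Expo n, a ≠ 0 → lt 0 a
  var_lt : ∀ i j : Fin (n + 1), i < j → lt (sing i) (sing j)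

/-- `M ∩ 𝕋_t` is a segment w.r.t. the order `lt`. -/
def IsSegmentAt {n : ℕ} (lt : Expo n → Expo n → Prop) (M : Set (Expo n)) (t : ℕ) : Prop :=
  ∀ τ σ : Expo n, τ ∈ M → deg τ = t → deg σ = t → lt τ σ → σ ∈ M

/-- `M` is a segment ideal w.r.t. the order `lt`. -/
def IsSegmentIdeal {n : ℕ} (lt : Expo n → Expo n → Prop) (M : Set (Expo n)) : Prop :=
  ∀ t : ℕ, IsSegmentAt lt M t

/-- `α` is a minimal monomial generator of the monomial ideal `M`. -/
def IsMinGen {n : ℕ} (M : Set (Expo n)) (α : Expo n) : Prop :=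
  α ∈ M ∧ ∀ β γ : Expo n, β + γ = α → β ∈ M → γ = 0

/-- The ideal generated by the elements of `M` of degree `≤ s - 1`. -/
def genBelow {n : ℕ} (M : Set (Expo n)) (s : ℕ) : Set (Expo n) :=
  {x | ∃ α γ : Expo n, α ∈ M ∧ deg α < s ∧ x = α + γ}

/-- `M` is a gen-segment ideal w.r.t. `lt`: for every `s` the minimal generators of
degree `s` are the greatest among the degree-`s` terms not in `⟨M_{≤ s-1}⟩`. -/
def IsGenSegment {n : ℕ} (lt : Expo n → Expo n → Prop) (M : Set (Expo n)) : Prop :=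
  ∀ α : Expo n, IsMinGen M α → ∀ σ : Expo n, deg σ = deg α →
    σ ∉ genBelow M (deg α) → ¬ IsMinGen M σ → lt σ α

/-- `δ` is the maximal degree of a minimal monomial generator of `M`. -/
def IsMaxGenDeg {n : ℕ} (M : Set (Expo n)) (δ : ℕ) : Prop :=
  (∃ α : Expo n, IsMinGen M α ∧ deg α = δ) ∧ ∀ α : Expo n, IsMinGen M α → deg α ≤ δ

/-- `p` is an admissible polynomial with Gotzmann decomposition of length `r`
(so `r` is its Gotzmann number):
`p(z) = ∑_{i=1}^{r} binom(z + a_i - (i-1), a_i)` with `a_1 ≥ … ≥ a_r ≥ 0`. -/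
def IsGotzmannDecomp (p : Polynomial ℚ) (r : ℕ) : Prop :=
  ∃ a : Fin r → ℕ, Antitone a ∧
    ∀ t : ℕ, r ≤ t →
      p.eval (t : ℚ) = ∑ i : Fin r, ((t + a i - (i : ℕ)).choose (a i) : ℚ)

/-- An admissible polynomial: one admitting a Gotzmann decomposition. -/
def IsAdmissible (p : Polynomial ℚ) : Prop := ∃ r : ℕ, IsGotzmannDecomp p r

/-- Setting `x_0 = x_1 = 1` in a term. -/
def trunc01 {n : ℕ} (α : Expo n) : Expo n := fun i => if (i : ℕ) ≤ 1 then 0 else α i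

/-- The `x_1`-saturation of a monomial ideal: the ideal generated by the minimal
generators with `x_0 = x_1 = 1`. -/
def xOneSat {n : ℕ} (M : Set (Expo n)) : Set (Expo n) :=
  {x | ∃ α γ : Expo n, IsMinGen M α ∧ x = trunc01 α + γ}

/-- The lexicographic comparison (intended for terms of equal degree):
`α ≺_lex β` iff `α_k < β_k` at the largest index `k` where they differ. -/
def LexLt {n : ℕ} (α β : Expo n) : Prop :=
  ∃ k : Fin (n + 1), α k < β k ∧ ∀ j : Fin (n + 1), k < j → α j = β j

/-- The reverse lexicographic comparison (intended for terms of equal degree):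
`α ≺_revlex β` iff `α_h > β_h` at the smallest index `h` where they differ. -/
def RevLexLt {n : ℕ} (α β : Expo n) : Prop :=
  ∃ h : Fin (n + 1), β h < α h ∧ ∀ j : Fin (n + 1), j < h → α j = β j

/-- A graded term order. -/
def IsGraded {n : ℕ} (ord : TermOrder n) : Prop :=
  ∀ α β : Expo n, deg α < deg β → ord.lt α β

/-- A reverse term order: a graded term order such that, on terms of equal degree,
a strictly larger exponent of `x_0` makes a term strictly smaller. -/
def IsReverseOrder {n : ℕ} (ord : TermOrder n) : Prop :=
  IsGraded ord ∧ ∀ α β : Expo n, deg α = deg β → β 0 < α 0 → ord.lt α β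

/-!
Uniqueness: in every degree `t`, the terms outside a segment ideal are the smallest ones, so if
the Hilbert polynomial is `d` they are the `d` smallest terms of degree `t` for all large `t`;
and a saturated monomial ideal is determined by its components of large degree.

Existence: when `n ≥ 1` and `t ≥ d`, the `d` smallest terms of degree `t` lie below `x_1^t`
(already the `t` terms `x_0^(t-b) x_1^b`, `b < t`, do), and multiplication by `x_0` maps them onto
the `d` smallest terms of degree `t + 1`. So the complements of these sets form an ideal, and
reading membership of `α` off `x_0^d α` extends it to a saturated one.
-/

open Finset

open scoped Classical

section RankIn

variable {α : Type*} {r : α → α → Prop} [IsStrictTotalOrder α r] {s : Finset α}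

variable (r s) in
noncomputable def rankIn (a : α) : ℕ := #{b ∈ s | r b a}

lemma rankIn_lt_rankIn {a b : α} (ha : a ∈ s) (hab : r a b) : rankIn r s a < rankIn r s b := by
  refine card_lt_card <| (ssubset_iff_of_subset fun c hc => ?_).mpr
    ⟨a, mem_filter.mpr ⟨ha, hab⟩, fun h => irrefl a (mem_filter.mp h).2⟩
  obtain ⟨hcs, hca⟩ := mem_filter.mp hc
  exact mem_filter.mpr ⟨hcs, _root_.trans hca hab⟩

lemma rankIn_lt_card {a : α} (ha : a ∈ s) : rankIn r s a < #s :=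
  card_lt_card <| filter_ssubset.mpr ⟨a, ha, irrefl_of r a⟩

lemma injOn_rankIn : Set.InjOn (rankIn r s) s := by
  intro a ha b hb h
  rcases trichotomous_of r a b with hab | hab | hab
  · exact absurd h (rankIn_lt_rankIn ha hab).ne
  · exact hab
  · exact absurd h (rankIn_lt_rankIn hb hab).ne'

lemma image_rankIn : s.image (rankIn r s) = range #s := by
  refine eq_of_subset_of_card_le (fun m hm => ?_) ?_
  · obtain ⟨a, ha, rfl⟩ := mem_image.mp hm
    exact mem_range.mpr (rankIn_lt_card ha)
  · rw [card_range, card_image_of_injOn injOn_rankIn]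

lemma card_filter_rankIn_lt (d : ℕ) : #{a ∈ s | rankIn r s a < d} = min d #s := by
  have hrange : {m ∈ range #s | m < d} = range (min d #s) := by
    ext m
    simp only [mem_filter, mem_range]
    omega
  rw [← card_image_of_injOn ((injOn_rankIn (r := r)).mono (filter_subset _ s)),
    ← filter_image (p := (· < d)), image_rankIn (r := r), hrange, card_range]

lemma filter_rankIn_lt_card_eq {A : Finset α} (hAs : A ⊆ s)
    (hA : ∀ a ∈ A, ∀ b ∈ s, r b a → b ∈ A) : {a ∈ s | rankIn r s a < #A} = A := by
  ext a
  simp only [mem_filter]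
  constructor
  · rintro ⟨has, hlt⟩
    by_contra haA
    refine hlt.not_ge (card_le_card fun b hb => mem_filter.mpr ⟨hAs hb, ?_⟩)
    rcases trichotomous_of r b a with h | rfl | h
    · exact h
    · exact absurd hb haA
    · exact absurd (hA b hb a has h) haA
  · intro haA
    refine ⟨hAs haA, card_lt_card <| (ssubset_iff_of_subset fun b hb => ?_).mpr
      ⟨a, haA, fun h => irrefl a (mem_filter.mp h).2⟩⟩
    obtain ⟨hbs, hba⟩ := mem_filter.mp hb
    exact hA a haA b hbs hba

end RankIn

section Terms

variable {n : ℕ}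

lemma deg_add (α β : Expo n) : deg (α + β) = deg α + deg β :=
  sum_add_distrib

lemma deg_nsmul (k : ℕ) (α : Expo n) : deg (k • α) = k * deg α := by
  simp [deg, mul_sum]

lemma deg_sing (i : Fin (n + 1)) : deg (sing i) = 1 := by
  simp [deg, sing]

lemma exists_eq_add_sing {α : Expo n} {i : Fin (n + 1)} (h : α i ≠ 0) :
    ∃ β, α = β + sing i := by
  refine ⟨α - sing i, funext fun j => ?_⟩
  rcases eq_or_ne j i with rfl | hj
  · simp only [sing, Pi.add_apply, Pi.sub_apply, Pi.single_eq_same]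
    omega
  · simp [sing, hj]

variable (n) in
def terms (t : ℕ) : Finset (Expo n) := Nat.antidiagonalTuple (n + 1) t

lemma mem_terms {α : Expo n} {t : ℕ} : α ∈ terms n t ↔ deg α = t :=
  Nat.mem_antidiagonalTuple

lemma subset_of_forall_le_deg {I J : Set (Expo n)} (hI : IsMonIdeal I) (hJ : IsSaturatedIdeal J)
    (T : ℕ) (h : ∀ α, T ≤ deg α → α ∈ I → α ∈ J) : I ⊆ J := fun α hα =>
  hJ α fun i => ⟨T, h _ (by rw [deg_add, deg_nsmul, deg_sing]; omega) (hI α hα _)⟩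

lemma eq_of_coIdeal_eq {I J : Set (Expo n)} (hI : IsMonIdeal I) (hIs : IsSaturatedIdeal I)
    (hJ : IsMonIdeal J) (hJs : IsSaturatedIdeal J) {T : ℕ}
    (h : ∀ t, T ≤ t → coIdeal I t = coIdeal J t) : I = J := by
  have hmem : ∀ α, T ≤ deg α → (α ∈ I ↔ α ∈ J) := fun α hα =>
    not_iff_not.mp <| by simpa [coIdeal] using congrArg (α ∈ ·) (h _ hα)
  exact (subset_of_forall_le_deg hI hJs T fun α hα => (hmem α hα).1).antisymm
    (subset_of_forall_le_deg hJ hIs T fun α hα => (hmem α hα).2)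

end Terms

namespace TermOrder

section

variable {n : ℕ} (ord : TermOrder n)

instance : IsStrictTotalOrder (Expo n) ord.lt where
  irrefl := ord.irrefl
  trans := ord.trans
  trichotomous a b hab hba := by
    by_contra h
    exact (ord.total a b h).elim hab hba

/-- A copy of `Expo n` on which `ord` is the order (`Expo n` itself carries the pointwise order),
making the terms an ordered cancellative monoid. -/
def Terms (_ : TermOrder n) : Type := Expo n

instance : AddCommMonoid ord.Terms := inferInstanceAs (AddCommMonoid (Expo n))

noncomputable instance : LinearOrder ord.Terms :=
  @linearOrderOfSTO (Expo n) ord.lt _ (Classical.decRel _)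

instance : IsOrderedCancelAddMonoid ord.Terms where
  add_le_add_left a b h c := by
    rcases h with rfl | h
    · exact le_rfl
    · exact Or.inr (ord.add_right a b c h)
  le_of_add_le_add_left a b c h := not_lt.mp fun hcb => not_lt.mpr h <| by
    change ord.lt ((a : Expo n) + c) (a + b)
    rw [add_comm (a : Expo n), add_comm (a : Expo n)]
    exact ord.add_right c b a hcb

def toTerms : Expo n ≃+ ord.Terms := AddEquiv.refl _

lemma toTerms_lt_toTerms {a b : Expo n} : ord.toTerms a < ord.toTerms b ↔ ord.lt a b := Iff.rfl

noncomputable def rankDeg (σ : Expo n) : ℕ := rankIn ord.lt (terms n (deg σ)) σ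

lemma rankDeg_lt_rankDeg {σ τ : Expo n} (hdeg : deg σ = deg τ) (h : ord.lt σ τ) :
    ord.rankDeg σ < ord.rankDeg τ := by
  unfold rankDeg
  rw [hdeg]
  exact rankIn_lt_rankIn (mem_terms.mpr hdeg) h

lemma rankDeg_le_rankDeg_add (σ γ : Expo n) : ord.rankDeg σ ≤ ord.rankDeg (σ + γ) := by
  unfold rankDeg
  refine card_le_card_of_injOn (· + γ) (fun ρ hρ => ?_) fun ρ _ ρ' _ h => add_right_cancel h
  obtain ⟨hρdeg, hρσ⟩ := mem_filter.mp hρ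
  rw [mem_coe, mem_filter, mem_terms, deg_add, deg_add, mem_terms.mp hρdeg]
  exact ⟨rfl, ord.add_right _ _ _ hρσ⟩

/-- The saturated segment ideal of colength `d`: in each degree `t ≥ d` it omits exactly the `d`
smallest terms, and the factor `x_0^d` extends it to all degrees by saturation. -/
def segIdeal (d : ℕ) : Set (Expo n) := {α | d ≤ ord.rankDeg (α + d • sing 0)}

lemma isMonIdeal_segIdeal (d : ℕ) : IsMonIdeal (ord.segIdeal d) := fun α hα γ =>
  hα.trans <| (ord.rankDeg_le_rankDeg_add _ γ).trans_eq <| by rw [add_right_comm]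

lemma isSegmentIdeal_segIdeal (d : ℕ) : IsSegmentIdeal ord.lt (ord.segIdeal d) :=
  fun _ τ σ hτ hτdeg hσdeg hτσ => hτ.trans <| le_of_lt <|
    ord.rankDeg_lt_rankDeg (by rw [deg_add, deg_add, hτdeg, hσdeg]) (ord.add_right _ _ _ hτσ)

noncomputable def lowTerms (t d : ℕ) : Finset (Expo n) :=
  {α ∈ terms n t | rankIn ord.lt (terms n t) α < d}

lemma coIdeal_eq_lowTerms {J : Set (Expo n)} (hJ : IsSegmentIdeal ord.lt J) (t : ℕ) :
    coIdeal J t = ord.lowTerms t (coIdeal J t).ncard := by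
  have hJt : coIdeal J t = ↑({α ∈ terms n t | α ∉ J}) := by
    ext α
    simp [coIdeal, mem_terms]
  rw [hJt, Set.ncard_coe_finset, lowTerms, filter_rankIn_lt_card_eq (filter_subset _ _)]
  intro α hα β hβ hβα
  obtain ⟨hαt, hαJ⟩ := mem_filter.mp hα
  exact mem_filter.mpr
    ⟨hβ, fun hβJ => hαJ <| hJ t β α hβJ (mem_terms.mp hβ) (mem_terms.mp hαt) hβα⟩

end

section

variable {n : ℕ} (ord : TermOrder (n + 1))

lemma sing_one_le_sing {i : Fin (n + 2)} (hi : i ≠ 0) :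
    ord.toTerms (sing 1) ≤ ord.toTerms (sing i) := by
  rcases eq_or_ne i 1 with rfl | hi1
  · exact le_rfl
  · exact Or.inr <| ord.var_lt 1 i <| lt_of_le_of_ne (Fin.one_le_of_ne_zero hi) hi1.symm

lemma nsmul_sing_one_le {α : Expo (n + 1)} (h : α 0 = 0) :
    ord.toTerms (deg α • sing 1) ≤ ord.toTerms α := by
  have hα : ∀ i, α i • ord.toTerms (sing 1) ≤ α i • ord.toTerms (sing i) := fun i => by
    rcases eq_or_ne i 0 with rfl | hi
    · simp [h]
    · exact nsmul_le_nsmul_right (ord.sing_one_le_sing hi) _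
  calc ord.toTerms (deg α • sing 1) = ∑ i, α i • ord.toTerms (sing 1) := by
        rw [map_nsmul, deg, sum_smul]
    _ ≤ ∑ i, α i • ord.toTerms (sing i) := sum_le_sum fun i _ => hα i
    _ = ord.toTerms α := by
        simp_rw [← map_nsmul, ← map_sum]
        congr 1
        ext j
        simp [sing, Finset.sum_apply, Pi.single_apply]

lemma le_rankDeg_nsmul_sing_one (t : ℕ) : t ≤ ord.rankDeg (t • sing 1) := by
  have hdeg : deg (t • sing (1 : Fin (n + 2))) = t := by rw [deg_nsmul, deg_sing, mul_one]
  unfold rankDeg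
  rw [hdeg]
  calc t = #(range t) := (card_range t).symm
    _ ≤ _ := card_le_card_of_injOn (fun b => (t - b) • sing 0 + b • sing 1) (fun b hb => ?_)
      fun b _ b' _ h => by simpa [sing] using congrFun h 1
  have hbt : b < t := mem_range.mp hb
  refine mem_filter.mpr ⟨mem_terms.mpr ?_, ?_⟩
  · rw [deg_add, deg_nsmul, deg_nsmul, deg_sing, deg_sing]
    omega
  · rw [← toTerms_lt_toTerms, map_add, map_nsmul, map_nsmul, map_nsmul]
    calc (t - b) • ord.toTerms (sing 0) + b • ord.toTerms (sing 1)
        < (t - b) • ord.toTerms (sing 1) + b • ord.toTerms (sing 1) :=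
          add_lt_add_left (nsmul_lt_nsmul_right (by omega) (ord.var_lt 0 1 Fin.zero_lt_one)) _
      _ = t • ord.toTerms (sing 1) := by rw [← add_nsmul, Nat.sub_add_cancel hbt.le]

lemma lt_nsmul_sing_one_of_rankDeg_lt {τ : Expo (n + 1)} (h : ord.rankDeg τ < deg τ) :
    ord.lt τ (deg τ • sing 1) := by
  have hx := ord.le_rankDeg_nsmul_sing_one (deg τ)
  rcases trichotomous_of ord.lt τ (deg τ • sing 1) with hlt | heq | hgt
  · exact hlt
  · rw [← heq] at hx
    omega
  · have := ord.rankDeg_lt_rankDeg (by rw [deg_nsmul, deg_sing, mul_one]) hgt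
    omega

/-- Everything below `x_0 τ` lies below `x_1^(deg τ + 1)`, hence is divisible by `x_0`. -/
lemma rankDeg_add_sing_zero {τ : Expo (n + 1)} (h : ord.rankDeg τ < deg τ) :
    ord.rankDeg (τ + sing 0) = ord.rankDeg τ := by
  refine le_antisymm ?_ (ord.rankDeg_le_rankDeg_add τ _)
  unfold rankDeg
  refine card_le_card_of_surjOn (· + sing 0) fun ρ hρ => ?_
  obtain ⟨hρdeg, hρτ⟩ := mem_filter.mp hρ
  have hρdeg : deg ρ = deg τ + 1 := by rw [mem_terms.mp hρdeg, deg_add, deg_sing]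
  have hτ : ord.lt (τ + sing 0) (deg ρ • sing 1) := by
    rw [← toTerms_lt_toTerms, hρdeg, succ_nsmul, map_add, map_add]
    exact add_lt_add (ord.lt_nsmul_sing_one_of_rankDeg_lt h) (ord.var_lt 0 1 Fin.zero_lt_one)
  have hρ0 : ρ 0 ≠ 0 := fun h0 => lt_irrefl _ <|
    (ord.nsmul_sing_one_le h0).trans_lt <| (ord.toTerms_lt_toTerms.mpr hρτ).trans hτ
  obtain ⟨ρ', rfl⟩ := exists_eq_add_sing hρ0
  rw [deg_add, deg_sing, Nat.add_right_cancel_iff] at hρdeg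
  exact ⟨ρ', mem_filter.mpr ⟨mem_terms.mpr hρdeg,
    lt_of_add_lt_add_right (a := ord.toTerms (sing 0)) hρτ⟩, rfl⟩

lemma rankDeg_add_nsmul_sing_zero {τ : Expo (n + 1)} (h : ord.rankDeg τ < deg τ) (k : ℕ) :
    ord.rankDeg (τ + k • sing 0) = ord.rankDeg τ := by
  induction k with
  | zero => simp
  | succ k ih =>
    rw [succ_nsmul, ← add_assoc, ord.rankDeg_add_sing_zero, ih]
    rw [ih, deg_add, deg_nsmul, deg_sing]
    omega

lemma mem_segIdeal_iff {d : ℕ} {α : Expo (n + 1)} (h : d ≤ deg α) :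
    α ∈ ord.segIdeal d ↔ d ≤ ord.rankDeg α := by
  refine ⟨fun hα => ?_, fun hα => hα.trans (ord.rankDeg_le_rankDeg_add α _)⟩
  by_contra hlt
  rw [not_le] at hlt
  have := ord.rankDeg_add_nsmul_sing_zero (hlt.trans_le h) d
  exact (hα.trans_eq this).not_gt hlt

lemma isSaturatedIdeal_segIdeal (d : ℕ) : IsSaturatedIdeal (ord.segIdeal d) := by
  intro α hα
  obtain ⟨k, hk⟩ := hα 0
  by_contra hlt
  have hlt : ord.rankDeg (α + d • sing 0) < d := not_le.mp hlt
  have hdeg : d ≤ deg (α + d • sing 0) := by rw [deg_add, deg_nsmul, deg_sing]; omega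
  have := ord.rankDeg_add_nsmul_sing_zero (hlt.trans_le hdeg) k
  rw [add_right_comm] at this
  exact (hk.trans_eq this).not_gt hlt

lemma coIdeal_segIdeal {d t : ℕ} (h : d ≤ t) :
    coIdeal (ord.segIdeal d) t = ord.lowTerms t d := by
  ext α
  simp only [coIdeal, lowTerms, coe_filter, mem_terms, Set.mem_ofPred_eq]
  refine and_congr_right fun hα => ?_
  rw [ord.mem_segIdeal_iff (hα ▸ h), not_le, rankDeg, hα]

lemma card_lowTerms {d t : ℕ} (h : d ≤ t) : #(ord.lowTerms t d) = d := by
  have hdeg : deg (t • sing (1 : Fin (n + 2))) = t := by rw [deg_nsmul, deg_sing, mul_one]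
  have hrank := ord.le_rankDeg_nsmul_sing_one t
  rw [rankDeg, hdeg] at hrank
  have := hrank.trans_lt (rankIn_lt_card (mem_terms.mpr hdeg))
  rw [lowTerms, card_filter_rankIn_lt]
  omega

lemma hasHilbPoly_segIdeal (d : ℕ) : HasHilbPoly (ord.segIdeal d) (C (d : ℚ)) :=
  ⟨d, fun t ht => by
    rw [ord.coIdeal_segIdeal ht, Set.ncard_coe_finset, ord.card_lowTerms ht, eval_C]⟩

end

end TermOrder

theorem unique_saturated_segment_ideal_general {n : ℕ} (hn : 1 ≤ n) (d : ℕ)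
    (ord : TermOrder n) :
    ∃! I : Set (Expo n), IsMonIdeal I ∧ IsSaturatedIdeal I ∧
      IsSegmentIdeal ord.lt I ∧ HasHilbPoly I (Polynomial.C (d : ℚ)) := by
  obtain ⟨n, rfl⟩ : ∃ m, n = m + 1 := ⟨n - 1, by omega⟩
  refine ⟨ord.segIdeal d, ⟨ord.isMonIdeal_segIdeal d, ord.isSaturatedIdeal_segIdeal d,
    ord.isSegmentIdeal_segIdeal d, ord.hasHilbPoly_segIdeal d⟩, ?_⟩
  rintro J ⟨hJ, hJs, hJseg, N, hN⟩
  refine eq_of_coIdeal_eq hJ hJs (ord.isMonIdeal_segIdeal d) (ord.isSaturatedIdeal_segIdeal d)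
    (T := max N d) fun t ht => ?_
  have hcard : (coIdeal J t).ncard = d := by
    exact_mod_cast (hN t (le_of_max_le_left ht)).trans eval_C
  rw [ord.coIdeal_eq_lowTerms hJseg, hcard, ord.coIdeal_segIdeal (le_of_max_le_right ht)]

/-- For every positive integer `d` and every term order `≺` there is exactly
one saturated segment ideal w.r.t. `≺` with constant Hilbert polynomial `d`. -/
theorem unique_saturated_segment_ideal {n : ℕ} (hn : 1 ≤ n) (d : ℕ) (hd : 0 < d)
    (ord : TermOrder n) :
    ∃! I : Set (Expo n), IsMonIdeal I ∧ IsSaturatedIdeal I ∧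
      IsSegmentIdeal ord.lt I ∧ HasHilbPoly I (Polynomial.C (d : ℚ)) :=
  unique_saturated_segment_ideal_general hn d ord
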